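/- Let P(z) = a_n zⁿ + ⋯ + a₀ be a polynomial with real coefficients, n ≥ 1 and a_n > 0, and set A(z) = P(e^z). Then there exists a constant C > 0 such that every nontrivial real solution f of f'' + A(z)f = 0 satisfies n([0, r), f) ≥ C e^{nr/2} for all sufficiently large r, where n([0, r), f) denotes the number of zeros of f on the interval [0, r). -/

import Mathlib

/-!
On `[r - 1, r - 1/2]` the coefficient satisfies `A(x) = P(eˣ) ≥ (a_n / 2) e^{n(r-1)} =: k²`, so by
Sturm comparison with `sin (k (x - a))` the real solution has a zero in every interval of length
`π / k` there, hence at least about `k / (4π)` zeros; and `k` is a constant times `e^{nr/2}`.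
Since `Set.ncard` of an infinite set is `0`, the count also uses that the nonzero entire `f` has
only finitely many zeros on a bounded segment.
-/

open Complex MeasureTheory Filter Metric Real
open scoped ENNReal Classical

noncomputable section

/-- The positive part of the logarithm, `log⁺ x = max (log x) 0`. -/
def plog (x : ℝ) : ℝ := max (Real.log x) 0

/-- The Nevanlinna proximity function `m(r, g)`. -/
def prox (g : ℂ → ℂ) (r : ℝ) : ℝ :=
  (2 * π)⁻¹ * ∫ θ in (0:ℝ)..(2 * π),
    plog ‖g ((r : ℂ) * Complex.exp ((θ : ℂ) * Complex.I))‖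

/-- The integrated counting function of the set of points `Z` (each point counted once). -/
def Ncnt (Z : Set ℂ) (r : ℝ) : ℝ :=
  ∫ t in (1:ℝ)..r, ((Z ∩ Metric.closedBall (0:ℂ) t).ncard : ℝ) / t

/-- The maximum modulus `M(r, f)`. -/
def maxMod (f : ℂ → ℂ) (r : ℝ) : ℝ :=
  sSup ((fun z => ‖f z‖) '' Metric.sphere (0:ℂ) r)

/-- The order of growth `ρ(f) = limsup_{r→∞} log log M(r,f) / log r`. -/
def growthOrder (f : ℂ → ℂ) : ℝ≥0∞ :=
  Filter.limsup (fun r : ℝ =>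
    ENNReal.ofReal (Real.log (Real.log (maxMod f r)) / Real.log r)) Filter.atTop

/-- The exponent of convergence of the nonzero zeros of `f`: the infimum of
all `s > 0` with `∑ |z_k|^{-s} < ∞`, the sum running over the nonzero zeros of `f`. -/
def convExp (f : ℂ → ℂ) : ℝ≥0∞ :=
  sInf (ENNReal.ofReal '' {s : ℝ | 0 < s ∧
    Summable fun z : {z : ℂ // f z = 0 ∧ z ≠ 0} => ‖(z : ℂ)‖ ^ (-s)})

/-- Exponential polynomials `∑ P_j(z) e^{Q_j(z)}`. -/
def IsExpPoly (A : ℂ → ℂ) : Prop :=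
  ∃ (k : ℕ) (P Q : Fin k → Polynomial ℂ),
    ∀ z, A z = ∑ j, (P j).eval z * Complex.exp ((Q j).eval z)

/-- The circumference of the convex hull of a bounded set `W ⊆ ℂ`, via Cauchy's
formula: the integral over directions of the support function of `W`. -/
def hullPerimeter (W : Set ℂ) : ℝ :=
  ∫ θ in (0:ℝ)..(2 * π),
    sSup ((fun w => (w * Complex.exp (-(θ : ℂ) * Complex.I)).re) '' W)

/-- The Phragmén–Lindelöf indicator function of `f` with exponent `ρ`. -/
def plIndicator (ρ : ℝ) (f : ℂ → ℂ) (θ : ℝ) : ℝ :=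
  Filter.limsup (fun r : ℝ =>
    Real.log ‖f ((r : ℂ) * Complex.exp ((θ : ℂ) * Complex.I))‖ / r ^ ρ)
    Filter.atTop

theorem Polynomial.eventually_leadingCoeff_div_two_mul_pow_le_eval (P : Polynomial ℝ)
    (hlead : 0 < P.leadingCoeff) :
    ∀ᶠ t : ℝ in atTop, P.leadingCoeff / 2 * t ^ P.natDegree ≤ P.eval t := by
  filter_upwards [P.isEquivalent_atTop_lead.def (c := 1 / 2) (by norm_num),
    eventually_ge_atTop 0] with t ht ht0
  have hlt : 0 ≤ P.leadingCoeff * t ^ P.natDegree := by positivity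
  rw [Real.norm_of_nonneg hlt, Real.norm_eq_abs, Pi.sub_apply] at ht
  linarith [(abs_le.mp ht).1]

theorem Polynomial.exists_forall_leadingCoeff_div_two_mul_exp_le_eval_exp (P : Polynomial ℝ)
    (hlead : 0 < P.leadingCoeff) : ∃ x₀, ∀ a x, x₀ ≤ a → a ≤ x →
      P.leadingCoeff / 2 * Real.exp (P.natDegree * a) ≤ P.eval (Real.exp x) := by
  obtain ⟨x₀, hx₀⟩ := eventually_atTop.mp <| Real.tendsto_exp_atTop.eventually
    (P.eventually_leadingCoeff_div_two_mul_pow_le_eval hlead)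
  refine ⟨x₀, fun a x hx₀a hax ↦ ?_⟩
  calc P.leadingCoeff / 2 * Real.exp (P.natDegree * a)
      ≤ P.leadingCoeff / 2 * Real.exp x ^ P.natDegree := by rw [← Real.exp_nat_mul]; gcongr
    _ ≤ P.eval (Real.exp x) := hx₀ x (hx₀a.trans hax)

section Sturm

open Set

variable {g g' q : ℝ → ℝ} {a b k : ℝ}

/-- Sturm comparison with `sin (k (x - a))`, a solution of `u'' = -k² u` vanishing at both
ends of `[a, a + π / k]`: the modified Wronskian below is monotone there while a positive
`g` would make it go from `k g(a) > 0` down to `-k g(a + π/k) < 0`. -/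
theorem exists_mem_Icc_nonpos_of_sq_le (hg : ∀ x, HasDerivAt g (g' x) x)
    (hg' : ∀ x, HasDerivAt g' (-(q x * g x)) x) (hk : 0 < k)
    (hq : ∀ x ∈ Icc a (a + π / k), k ^ 2 ≤ q x) :
    ∃ x ∈ Icc a (a + π / k), g x ≤ 0 := by
  by_contra! hpos
  set b := a + π / k
  have hab : a ≤ b := le_add_of_nonneg_right (by positivity)
  set W : ℝ → ℝ := fun x ↦ g x * (k * Real.cos (k * (x - a))) - g' x * Real.sin (k * (x - a))
  have hW : ∀ x, HasDerivAt W ((q x - k ^ 2) * g x * Real.sin (k * (x - a))) x := by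
    intro x
    have hlin : HasDerivAt (fun y ↦ k * (y - a)) k x := by
      simpa using ((hasDerivAt_id x).sub_const a).const_mul k
    refine ((hg x).mul (hlin.cos.const_mul k)).sub ((hg' x).mul hlin.sin) |>.congr_deriv ?_
    ring
  have hkb : k * (b - a) = π := by simp only [b]; field_simp; ring
  have hmono : MonotoneOn W (Icc a b) := by
    refine monotoneOn_of_deriv_nonneg (convex_Icc a b)
      (fun x _ ↦ (hW x).continuousAt.continuousWithinAt)
      (fun x _ ↦ (hW x).differentiableAt.differentiableWithinAt) fun x hx ↦ ?_
    rw [interior_Icc] at hx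
    rw [(hW x).deriv]
    have hsin : 0 ≤ Real.sin (k * (x - a)) :=
      sin_nonneg_of_nonneg_of_le_pi (by nlinarith [hx.1]) (by nlinarith [hx.2])
    have hx' : x ∈ Icc a b := Ioo_subset_Icc_self hx
    exact mul_nonneg (mul_nonneg (by linarith [hq x hx']) (hpos x hx').le) hsin
  have hWa : W a = g a * k := by simp [W]
  have hWb : W b = -(g b * k) := by simp [W, hkb]
  have := hmono (left_mem_Icc.mpr hab) (right_mem_Icc.mpr hab) hab
  nlinarith [hpos a (left_mem_Icc.mpr hab), hpos b (right_mem_Icc.mpr hab)]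

theorem exists_mem_Icc_eq_zero_of_sq_le (hg : ∀ x, HasDerivAt g (g' x) x)
    (hg' : ∀ x, HasDerivAt g' (-(q x * g x)) x) (hk : 0 < k)
    (hq : ∀ x ∈ Icc a (a + π / k), k ^ 2 ≤ q x) :
    ∃ x ∈ Icc a (a + π / k), g x = 0 := by
  obtain ⟨x, hx, hgx⟩ := exists_mem_Icc_nonpos_of_sq_le hg hg' hk hq
  obtain ⟨y, hy, hgy⟩ := exists_mem_Icc_nonpos_of_sq_le (g := -g) (g' := -g')
    (fun x ↦ (hg x).neg) (fun x ↦ (hg' x).neg.congr_deriv (by simp)) hk hq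
  have hcont : ContinuousOn g (Icc a (a + π / k)) :=
    fun x _ ↦ (hg x).continuousAt.continuousWithinAt
  obtain ⟨z, hz, hgz⟩ := isPreconnected_Icc.intermediate_value hx hy hcont
    ⟨hgx, by simpa using hgy⟩
  exact ⟨z, hz, hgz⟩

theorem le_ncard_zeros_of_sq_le (hg : ∀ x, HasDerivAt g (g' x) x)
    (hg' : ∀ x, HasDerivAt g' (-(q x * g x)) x) (hk : 0 < k)
    (hq : ∀ x ∈ Icc a b, k ^ 2 ≤ q x) (hfin : {x ∈ Icc a b | g x = 0}.Finite) :
    (b - a) * k / (2 * π) - 1 / 2 ≤ {x ∈ Icc a b | g x = 0}.ncard := by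
  set h := π / k
  have hh : 0 < h := by positivity
  set T := ⌊((b - a) / h + 1) / 2⌋₊
  have hjT : ∀ j ∈ Iio T, a + 2 * j * h + h ≤ b := by
    intro j hj
    have := (Nat.le_floor_iff' j.succ_ne_zero).mp (Nat.succ_le_of_lt hj)
    push_cast at this
    have : (2 * j + 1) * h ≤ b - a := by
      rw [← le_div_iff₀ hh]; linarith
    linarith
  have hzero : ∀ j ∈ Iio T, ∃ x ∈ Icc (a + 2 * j * h) (a + 2 * j * h + h), g x = 0 :=
    fun j hj ↦ exists_mem_Icc_eq_zero_of_sq_le hg hg' hk fun x hx ↦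
      hq x ⟨le_trans (by simp only [le_add_iff_nonneg_right]; positivity) hx.1,
        hx.2.trans (hjT j hj)⟩
  choose! z hz hgz using hzero
  have hmono : StrictMonoOn z (Iio T) := by
    intro i hi j hj hij
    have : (i : ℝ) + 1 ≤ j := by exact_mod_cast hij
    nlinarith [(hz i hi).2, (hz j hj).1]
  have hcard : (Iio T).ncard ≤ {x ∈ Icc a b | g x = 0}.ncard := ncard_le_ncard_of_injOn z (fun j hj ↦
    ⟨⟨(le_add_of_nonneg_right (by positivity)).trans (hz j hj).1, (hz j hj).2.trans (hjT j hj)⟩,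
      hgz j hj⟩) hmono.injOn hfin
  rw [ncard_Iio_nat, ← Nat.cast_le (α := ℝ)] at hcard
  have hT := Nat.sub_one_lt_floor (((b - a) / h + 1) / 2)
  have hx : ((b - a) / h + 1) / 2 - 1 = (b - a) * k / (2 * π) - 1 / 2 := by
    simp only [h]; field_simp; ring
  linarith

end Sturm

theorem Differentiable.finite_zeros_of_isCompact {f : ℂ → ℂ} (hf : Differentiable ℂ f)
    (hne : f ≠ 0) {K : Set ℂ} (hK : IsCompact K) : {z ∈ K | f z = 0}.Finite := by
  obtain hzero | hcod := AnalyticOnNhd.eqOn_zero_or_eventually_ne_zero_of_preconnected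
    (fun z _ ↦ hf.analyticAt z) isPreconnected_univ
  · exact absurd (funext fun z ↦ hzero (Set.mem_univ z)) hne
  · exact (hK.finite_sdiff_of_mem_codiscreteWithin
      (codiscreteWithin_mono (Set.subset_univ K) hcod)).subset fun z hz ↦ ⟨hz.1, not_not.mpr hz.2⟩

theorem hasDerivAt_re_deriv_of_deriv_deriv_add_mul_eq_zero {f A : ℂ → ℂ} {q : ℝ → ℝ}
    (hf : Differentiable ℂ f) (hode : ∀ z, deriv (deriv f) z + A z * f z = 0)
    (hA : ∀ x : ℝ, A x = q x) (x : ℝ) :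
    HasDerivAt (fun t : ℝ ↦ (deriv f t).re) (-(q x * (f x).re)) x := by
  have h := (hf.deriv x).hasDerivAt.real_of_complex
  rwa [eq_neg_of_add_eq_zero_left (hode x), hA, neg_re, re_ofReal_mul] at h

theorem le_ncard_zeros_Ico_of_sq_le {f A : ℂ → ℂ} {q : ℝ → ℝ} {a b k r : ℝ}
    (hf : Differentiable ℂ f) (hne : f ≠ 0) (hode : ∀ z, deriv (deriv f) z + A z * f z = 0)
    (hA : ∀ x : ℝ, A x = q x) (hreal : ∀ x : ℝ, (f x).im = 0) (hk : 0 < k)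
    (hq : ∀ x ∈ Set.Icc a b, k ^ 2 ≤ q x) (ha : 0 ≤ a) (hb : b < r) :
    (b - a) * k / (2 * π) - 1 / 2 ≤ {x : ℝ | x ∈ Set.Ico 0 r ∧ f x = 0}.ncard := by
  have hS : {x ∈ Set.Icc a b | (f x).re = 0} ⊆ {x : ℝ | x ∈ Set.Ico 0 r ∧ f x = 0} :=
    fun x hx ↦ ⟨⟨ha.trans hx.1.1, hx.1.2.trans_lt hb⟩,
      Complex.ext (by simpa using hx.2) (by simpa using hreal x)⟩
  have hfin : {x : ℝ | x ∈ Set.Ico 0 r ∧ f x = 0}.Finite :=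
    (hf.finite_zeros_of_isCompact hne (isCompact_Icc.image continuous_ofReal)).preimage
      ofReal_injective.injOn |>.subset fun x hx ↦ ⟨⟨x, Set.Ico_subset_Icc_self hx.1, rfl⟩, hx.2⟩
  calc (b - a) * k / (2 * π) - 1 / 2 ≤ {x ∈ Set.Icc a b | (f x).re = 0}.ncard :=
        le_ncard_zeros_of_sq_le (fun x ↦ (hf x).hasDerivAt.real_of_complex)
          (hasDerivAt_re_deriv_of_deriv_deriv_add_mul_eq_zero hf hode hA) hk hq (hfin.subset hS)
    _ ≤ _ := by exact_mod_cast Set.ncard_le_ncard hS hfin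

/-- Let `P(z) = a_n zⁿ + ⋯ + a₀` be a real polynomial with `n ≥ 1` and
`a_n > 0`, and `A(z) = P(e^z)`. Then there is a constant `C > 0` such that every
nontrivial real entire solution `f` of `f'' + A f = 0` (real-valued on the real axis)
satisfies `n([0, r), f) ≥ C e^{nr/2}` for all sufficiently large `r`, where
`n([0, r), f)` is the number of zeros of `f` on `[0, r)` (they are simple, as `f` solves
a second-order linear ODE, so no multiplicities are needed). -/
theorem stmt13 (P : Polynomial ℝ) (hdeg : 1 ≤ P.natDegree) (hlead : 0 < P.leadingCoeff)
    (A : ℂ → ℂ) (hA : ∀ z, A z = Polynomial.aeval (Complex.exp z) P) :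
    ∃ C > (0 : ℝ), ∀ f : ℂ → ℂ, Differentiable ℂ f → f ≠ 0 →
      (∀ z, deriv (deriv f) z + A z * f z = 0) →
      (∀ x : ℝ, (f (x : ℂ)).im = 0) →
      ∀ᶠ r : ℝ in atTop,
        C * Real.exp ((P.natDegree : ℝ) * r / 2) ≤
          ({x : ℝ | x ∈ Set.Ico 0 r ∧ f (x : ℂ) = 0}.ncard : ℝ) := by
  obtain ⟨x₀, hx₀⟩ := P.exists_forall_leadingCoeff_div_two_mul_exp_le_eval_exp hlead
  set n : ℝ := (P.natDegree : ℝ)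
  set c := P.leadingCoeff
  set k : ℝ → ℝ := fun r ↦ √(c / 2) * Real.exp (n * (r - 1) / 2)
  have hk_sq (r : ℝ) : k r ^ 2 = c / 2 * Real.exp (n * (r - 1)) := by
    rw [mul_pow, sq_sqrt (by positivity), ← Real.exp_nat_mul]; ring_nf
  have hk : Tendsto k atTop atTop :=
    (tendsto_exp_atTop.comp <| (((tendsto_id.atTop_add tendsto_const_nhds).const_mul_atTop
      (Nat.cast_pos.mpr hdeg)).atTop_div_const two_pos)).const_mul_atTop (by positivity)
  refine ⟨√(c / 2) * Real.exp (-n / 2) / (8 * π), by positivity, fun f hf hne hode hreal ↦ ?_⟩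
  have hAq (x : ℝ) : A x = ↑(P.eval (Real.exp x)) := by
    rw [hA, ← ofReal_exp]; exact (Polynomial.ofReal_eval _ _).symm
  filter_upwards [eventually_ge_atTop (max x₀ 0 + 1), hk.eventually_ge_atTop (4 * π)]
    with r hr hkr
  have hcount := le_ncard_zeros_Ico_of_sq_le (a := r - 1) (b := r - 1 / 2) (r := r) hf hne hode
    hAq hreal (by positivity) (fun x hx ↦ hk_sq r ▸ hx₀ _ x (by linarith [le_max_left x₀ 0]) hx.1)
    (by linarith [le_max_right x₀ 0]) (by linarith)
  calc √(c / 2) * Real.exp (-n / 2) / (8 * π) * Real.exp (n * r / 2) = k r / (8 * π) := by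
        simp only [k]; rw [mul_div_right_comm, mul_assoc, ← Real.exp_add]; ring_nf
    _ ≤ (r - 1 / 2 - (r - 1)) * k r / (2 * π) - 1 / 2 := by
        have : 1 / 2 ≤ k r / (8 * π) := by rw [le_div_iff₀ (by positivity)]; linarith
        linarith [show (r - 1 / 2 - (r - 1)) * k r / (2 * π) = 2 * (k r / (8 * π)) by ring]
    _ ≤ _ := hcount
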